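/- arXiv:1502.00357 — 5 statements merged into one kernel-verified Lean document; each statement's English description precedes it below -/
import Mathlib

section
/- Let n ≥ 2 and let f : {0,1}^n → {0,1} be a Boolean function that depends on all n of its variables. Then there exists an index i ∈ [n] and a bit b ∈ {0,1} such that the restriction f|_{x_i=b}, viewed as a Boolean function on the remaining n−1 variables, depends on all n−1 of those variables. -/
/-- `f` depends on variable `i`: flipping the `i`-th coordinate of some input changes the value. -/
def BoolDependsOn {ι : Type*} [DecidableEq ι] (f : (ι → Bool) → Bool) (i : ι) : Prop :=
  ∃ a : ι → Bool, f (Function.update a i (!a i)) ≠ f a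

/-- The restriction `f|_{x_i = b}`, a Boolean function on the remaining variables. -/
def restrictBit {ι : Type*} [DecidableEq ι] (f : (ι → Bool) → Bool) (i : ι) (b : Bool) :
    ({j : ι // j ≠ i} → Bool) → Bool :=
  fun y => f (fun j => if h : j = i then b else y ⟨j, h⟩)

/-!
Among all restrictions `f|_{x_i=b}`, take one depending on the largest number of variables,
and suppose it ignores some `x_j`. As `f` depends on `x_i`, some input `a` has
`f(a^{(i)}) ≠ f(a)`; put `c = a_j`. Then `f|_{x_j=c}` depends on `x_i`, and also on every
variable `x_k` that `f|_{x_i=b}` depends on: a witness `p` for `x_k` can be moved into the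
slice `x_j = c` by setting `p_j := c`, which changes neither `f(p)` nor `f(p^{(k)})` because
both points lie in the slice `x_i = b`, where `x_j` is irrelevant. So `f|_{x_j=c}` depends on
strictly more variables, contradicting maximality.
-/

open Function Finset

section

variable {ι : Type*} [DecidableEq ι] (f : (ι → Bool) → Bool)

def sliceSupport [Fintype ι] (i : ι) (b : Bool) : Finset ι :=
  {j | j ≠ i ∧ ∃ a : ι → Bool, a i = b ∧ f (update a j (!a j)) ≠ f a}

variable {f}

lemma restrictBit_update {i : ι} {b : Bool} (y : {j : ι // j ≠ i} → Bool)
    (j : {j : ι // j ≠ i}) (v : Bool) :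
    restrictBit f i b (update y j v) =
      f (update (fun k => if h : k = i then b else y ⟨k, h⟩) j v) := by
  unfold restrictBit
  congr 1
  funext k
  by_cases hk : k = i
  · subst hk
    simp [update_of_ne j.2.symm]
  · by_cases hkj : k = j
    · subst hkj
      simp [hk]
    · have : (⟨k, hk⟩ : {j : ι // j ≠ i}) ≠ j := fun h => hkj (congrArg Subtype.val h)
      simp [hk, hkj, this]

lemma mem_sliceSupport_iff [Fintype ι] {i : ι} {b : Bool} (j : {j : ι // j ≠ i}) :
    (j : ι) ∈ sliceSupport f i b ↔ BoolDependsOn (restrictBit f i b) j := by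
  obtain ⟨j, hji⟩ := j
  simp only [sliceSupport, mem_filter, mem_univ, true_and, hji, ne_eq, not_false_eq_true]
  constructor
  · rintro ⟨a, hai, ha⟩
    have hext : (fun k => if h : k = i then b else a k) = a := by
      funext k
      split_ifs with h
      · rw [h, hai]
      · rfl
    refine ⟨fun k => a k, ?_⟩
    rw [restrictBit_update]
    change f _ ≠ f (fun k => if h : k = i then b else a k)
    rwa [hext]
  · rintro ⟨y, hy⟩
    refine ⟨fun k => if h : k = i then b else y ⟨k, h⟩, dif_pos rfl, ?_⟩
    rw [restrictBit_update] at hy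
    simpa only [restrictBit, dif_neg hji] using hy

lemma update_eq_of_notMem_sliceSupport [Fintype ι] {i j : ι} {b : Bool} (hji : j ≠ i)
    (hj : j ∉ sliceSupport f i b) {a : ι → Bool} (hai : a i = b) (c : Bool) :
    f (update a j c) = f a := by
  by_contra hne
  rcases Bool.eq_or_eq_not c (a j) with rfl | rfl
  · exact hne (by rw [update_eq_self])
  · exact hj (by simpa [sliceSupport, hji] using ⟨a, hai, hne⟩)

lemma sliceSupport_subset_of_notMem [Fintype ι] {i j : ι} {b : Bool} (hji : j ≠ i)
    (hj : j ∉ sliceSupport f i b) (c : Bool) : sliceSupport f i b ⊆ sliceSupport f j c := by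
  intro k hk
  obtain ⟨hki, p, hpi, hpk⟩ := by simpa [sliceSupport] using hk
  have hkj : k ≠ j := by
    rintro rfl
    exact hj hk
  -- Moving `p` into the slice `x_j = c` is invisible to `f`, also after flipping `x_k`.
  have hmove : f (update p j c) = f p := update_eq_of_notMem_sliceSupport hji hj hpi c
  have hmove_k : f (update (update p k (!p k)) j c) = f (update p k (!p k)) :=
    update_eq_of_notMem_sliceSupport hji hj (by rwa [update_of_ne (Ne.symm hki)]) c
  refine mem_filter.2 ⟨mem_univ _, hkj, update p j c, update_self .., ?_⟩
  rwa [update_of_ne hkj, update_comm hkj.symm, hmove, hmove_k]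

lemma exists_sliceSupport_ssubset [Fintype ι] {i j : ι} {b : Bool} (hji : j ≠ i)
    (hj : j ∉ sliceSupport f i b) (hi : BoolDependsOn f i) :
    ∃ c, sliceSupport f i b ⊂ sliceSupport f j c := by
  obtain ⟨a, ha⟩ := hi
  have hi_notMem : i ∉ sliceSupport f i b := by simp [sliceSupport]
  have hi_mem : i ∈ sliceSupport f j (a j) := by
    simpa [sliceSupport, hji.symm] using ⟨a, rfl, ha⟩
  exact ⟨a j, (ssubset_insert hi_notMem).trans_subset
    (insert_subset hi_mem (sliceSupport_subset_of_notMem hji hj _))⟩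

theorem exists_restrictBit_nondegenerate [Fintype ι] [Nonempty ι]
    (hf : ∀ i, BoolDependsOn f i) :
    ∃ i b, ∀ j : {j : ι // j ≠ i}, BoolDependsOn (restrictBit f i b) j := by
  obtain ⟨⟨i, b⟩, hmax⟩ := Finite.exists_max fun p : ι × Bool => #(sliceSupport f p.1 p.2)
  refine ⟨i, b, fun j => ?_⟩
  rw [← mem_sliceSupport_iff]
  by_contra hj
  obtain ⟨c, hlt⟩ := exists_sliceSupport_ssubset j.2 hj (hf i)
  exact (card_lt_card hlt).not_ge (hmax (j, c))

end

/-- If `f` depends on all `n ≥ 2` of its variables, then for some `i` and bit `b`, the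
restriction `f|_{x_i = b}` depends on all the remaining `n - 1` variables. -/
theorem exists_nondegenerate_restriction (n : ℕ) (hn : 2 ≤ n)
    (f : (Fin n → Bool) → Bool) (hf : ∀ i : Fin n, BoolDependsOn f i) :
    ∃ (i : Fin n) (b : Bool),
      ∀ j : {j : Fin n // j ≠ i}, BoolDependsOn (restrictBit f i b) j :=
  have : Nonempty (Fin n) := ⟨⟨0, by omega⟩⟩
  exists_restrictBit_nondegenerate hf
end

section
/- Let f : {0,1}^n → {0,1} be a Boolean function that depends on all n of its variables, and let k be an integer with 0 < k ≤ n. Then there exists a set I ⊆ [n] with |I| = n − k and an assignment ρ : I → {0,1} such that the subfunction f|_ρ, obtained by fixing each variable x_i with i ∈ I to the value ρ(i), depends on all k of the remaining free variables. -/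
/-- `f` depends on variable `i`: flipping the `i`-th coordinate of some input changes the value. -/
def BoolFunDependsOn {ι : Type*} [DecidableEq ι] (f : (ι → Bool) → Bool) (i : ι) : Prop :=
  ∃ a : ι → Bool, f (Function.update a i (!a i)) ≠ f a

/-- The subfunction `f|_ρ` obtained by fixing each variable `x_i` with `i ∈ I` to `ρ i`,
as a Boolean function on the free variables indexed by `[n] \ I`. -/
def restrictSet {n : ℕ} (f : (Fin n → Bool) → Bool) (I : Finset (Fin n)) (ρ : Fin n → Bool) :
    ({j : Fin n // j ∉ I} → Bool) → Bool :=
  fun y => f (fun j => if h : j ∈ I then ρ j else y ⟨j, h⟩)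

/-!
Fix the variables one at a time, keeping the invariant that the subfunction depends on all of
its free variables. Given such a restriction, fix one more variable `x_i := b`, choosing the pair
`(i, b)` so that the new subfunction depends on as many free variables as possible. Were some
free `x_j` irrelevant to it, fix `x_j := c` instead, where `c` is the value of `x_j` in a witness
of the dependence on `x_i`. The resulting subfunction depends on `x_i`, and on every variable
relevant to the `(i, b)`-subfunction: a witness for that one can be moved to `x_j = c` by
flipping `x_j`, which the `(i, b)`-subfunction ignores. This contradicts the maximality of `(i, b)`.
-/

open Finset Function
open Set (EqOn)

variable {ι : Type*} [DecidableEq ι]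

def flipAt (a : ι → Bool) (l : ι) : ι → Bool :=
  update a l (!a l)

@[simp]
lemma flipAt_self (a : ι → Bool) (l : ι) : flipAt a l l = !a l :=
  update_self ..

lemma flipAt_of_ne (a : ι → Bool) {l j : ι} (h : j ≠ l) : flipAt a l j = a j :=
  update_of_ne h ..

lemma flipAt_comm (a : ι → Bool) {l j : ι} (h : l ≠ j) :
    flipAt (flipAt a l) j = flipAt (flipAt a j) l := by
  simp only [flipAt, update_of_ne h, update_of_ne h.symm, update_comm h]

lemma Set.EqOn.flipAt {a ρ : ι → Bool} {s : Set ι} {l : ι} (h : EqOn a ρ s) (hl : l ∉ s) :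
    EqOn (flipAt a l) ρ s :=
  fun _ hx ↦ (flipAt_of_ne a (ne_of_mem_of_not_mem hx hl)).trans (h hx)

lemma eqOn_insert_update_iff {a ρ : ι → Bool} {s : Set ι} {j : ι} {c : Bool} (hj : j ∉ s) :
    EqOn a (update ρ j c) (insert j s) ↔ a j = c ∧ EqOn a ρ s := by
  rw [EqOn, Set.forall_mem_insert, update_self]
  refine and_congr_right fun _ ↦ forall₂_congr fun x hx ↦ ?_
  rw [update_of_ne (ne_of_mem_of_not_mem hx hj)]

section Restriction

variable (f : (ι → Bool) → Bool)

/-- Dependence of `f|_ρ` on `l`, witnessed by a full input agreeing with `ρ` on `I`;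
meaningful only for `l ∉ I`. -/
def RestrictionDependsOn (I : Finset ι) (ρ : ι → Bool) (l : ι) : Prop :=
  ∃ a, EqOn a ρ I ∧ f (flipAt a l) ≠ f a

variable {f}

lemma restrictionDependsOn_empty_iff {ρ : ι → Bool} {l : ι} :
    RestrictionDependsOn f ∅ ρ l ↔ BoolFunDependsOn f l := by
  simp [RestrictionDependsOn, BoolFunDependsOn, flipAt]

lemma RestrictionDependsOn.exists_witness_apply_eq {J : Finset ι} {σ : ι → Bool} {l j : ι}
    (hl : RestrictionDependsOn f J σ l) (hlJ : l ∉ J) (hjJ : j ∉ J)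
    (hj : ¬RestrictionDependsOn f J σ j) (c : Bool) :
    ∃ a, EqOn a σ J ∧ a j = c ∧ f (flipAt a l) ≠ f a := by
  obtain ⟨a, ha, hfa⟩ := hl
  have hjl : j ≠ l := by
    rintro rfl
    exact hj ⟨a, ha, hfa⟩
  have hflip_j : ∀ a', EqOn a' σ J → f (flipAt a' j) = f a' :=
    fun a' ha' ↦ by_contra fun h ↦ hj ⟨a', ha', h⟩
  by_cases hc : a j = c
  · exact ⟨a, ha, hc, hfa⟩
  refine ⟨flipAt a j, ha.flipAt hjJ, by cases c <;> simpa using hc, ?_⟩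
  rwa [← flipAt_comm a hjl.symm, hflip_j _ (ha.flipAt hlJ), hflip_j a ha]

lemma RestrictionDependsOn.insert_of_not_restrictionDependsOn {I : Finset ι} {ρ : ι → Bool}
    {i j l : ι} {b : Bool} (hl : RestrictionDependsOn f (insert i I) (update ρ i b) l)
    (hi : i ∉ I) (hlJ : l ∉ insert i I) (hj : j ∉ insert i I)
    (hjdep : ¬RestrictionDependsOn f (insert i I) (update ρ i b) j) (c : Bool) :
    RestrictionDependsOn f (insert j I) (update ρ j c) l := by
  obtain ⟨a, ha, haj, hfa⟩ := hl.exists_witness_apply_eq hlJ hj hjdep c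
  rw [coe_insert, eqOn_insert_update_iff (mod_cast hi)] at ha
  have hjI : j ∉ I := fun h ↦ hj (mem_insert_of_mem h)
  refine ⟨a, ?_, hfa⟩
  rw [coe_insert, eqOn_insert_update_iff (mod_cast hjI)]
  exact ⟨haj, ha.2⟩

variable [Fintype ι]

variable (f) in
open Classical in
noncomputable def freeRelevantVars (I : Finset ι) (ρ : ι → Bool) : Finset ι :=
  Iᶜ.filter (RestrictionDependsOn f I ρ)

lemma mem_freeRelevantVars {I : Finset ι} {ρ : ι → Bool} {l : ι} :
    l ∈ freeRelevantVars f I ρ ↔ l ∉ I ∧ RestrictionDependsOn f I ρ l := by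
  simp only [freeRelevantVars, mem_filter, mem_compl]

lemma insert_freeRelevantVars_subset {I : Finset ι} {ρ a : ι → Bool} {i j : ι} {b : Bool}
    (hi : i ∉ I) (hj : j ∉ insert i I)
    (hjdep : ¬RestrictionDependsOn f (insert i I) (update ρ i b) j)
    (ha : EqOn a ρ I) (hfa : f (flipAt a i) ≠ f a) :
    insert i (freeRelevantVars f (insert i I) (update ρ i b)) ⊆
      freeRelevantVars f (insert j I) (update ρ j (a j)) := by
  have hjI : j ∉ I := fun h ↦ hj (mem_insert_of_mem h)
  have hji : j ≠ i := fun h ↦ hj (h ▸ mem_insert_self j I)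
  intro l hl
  rw [mem_insert, mem_freeRelevantVars] at hl
  rw [mem_freeRelevantVars]
  rcases hl with rfl | ⟨hlJ, hldep⟩
  · refine ⟨by simp [hi, hji.symm], a, ?_, hfa⟩
    rw [coe_insert, eqOn_insert_update_iff (mod_cast hjI)]
    exact ⟨rfl, ha⟩
  · have hlj : l ≠ j := fun h ↦ hjdep (h ▸ hldep)
    have hlI : l ∉ I := fun h ↦ hlJ (mem_insert_of_mem h)
    exact ⟨by simp [hlj, hlI], hldep.insert_of_not_restrictionDependsOn hi hlJ hj hjdep _⟩

lemma exists_insert_update_forall_restrictionDependsOn {I : Finset ι} {ρ : ι → Bool}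
    (hall : ∀ l ∉ I, RestrictionDependsOn f I ρ l) (hI : I ≠ univ) :
    ∃ i ∉ I, ∃ b, ∀ l ∉ insert i I, RestrictionDependsOn f (insert i I) (update ρ i b) l := by
  have hIc : Iᶜ.Nonempty := by rwa [← compl_ne_univ_iff_nonempty, compl_compl]
  obtain ⟨⟨i, b⟩, hib, hmax⟩ := exists_max_image (Iᶜ ×ˢ univ)
    (fun p ↦ (freeRelevantVars f (insert p.1 I) (update ρ p.1 p.2)).card)
    (hIc.product univ_nonempty)
  have hi : i ∉ I := by simpa using hib
  refine ⟨i, hi, b, fun j hj ↦ by_contra fun hjdep ↦ ?_⟩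
  obtain ⟨a, ha, hfa⟩ := hall i hi
  have hi_free : i ∉ freeRelevantVars f (insert i I) (update ρ i b) :=
    fun h ↦ (mem_freeRelevantVars.1 h).1 (mem_insert_self i I)
  have hle := card_le_card (insert_freeRelevantVars_subset hi hj hjdep ha hfa)
  rw [card_insert_of_notMem hi_free] at hle
  have hjI : j ∉ I := fun h ↦ hj (mem_insert_of_mem h)
  have hmax_j := hmax (j, a j) (by simpa using hjI)
  dsimp only at hmax_j
  omega

variable (f) in
lemma exists_restriction_forall_restrictionDependsOn (hf : ∀ i, BoolFunDependsOn f i) :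
    ∀ d ≤ Fintype.card ι, ∃ I : Finset ι, I.card = d ∧
      ∃ ρ, ∀ l ∉ I, RestrictionDependsOn f I ρ l := by
  intro d
  induction d with
  | zero =>
    exact fun _ ↦ ⟨∅, rfl, fun _ ↦ false, fun l _ ↦ restrictionDependsOn_empty_iff.2 (hf l)⟩
  | succ d ih =>
    intro hd
    obtain ⟨I, hcard, ρ, hall⟩ := ih (by omega)
    have hI : I ≠ univ := by
      rintro rfl
      rw [card_univ] at hcard
      omega
    obtain ⟨i, hi, b, hdep⟩ := exists_insert_update_forall_restrictionDependsOn hall hI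
    exact ⟨insert i I, by rw [card_insert_of_notMem hi, hcard], update ρ i b, hdep⟩

end Restriction

lemma restrictSet_comp_val_of_eqOn {n : ℕ} (f : (Fin n → Bool) → Bool) {I : Finset (Fin n)}
    {ρ a : Fin n → Bool} (ha : EqOn a ρ I) : restrictSet f I ρ (a ∘ Subtype.val) = f a := by
  refine congrArg f (funext fun j ↦ ?_)
  split_ifs with h
  · exact (ha h).symm
  · rfl

lemma RestrictionDependsOn.boolFunDependsOn_restrictSet {n : ℕ} {f : (Fin n → Bool) → Bool}
    {I : Finset (Fin n)} {ρ : Fin n → Bool} {l : Fin n} (h : RestrictionDependsOn f I ρ l)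
    (hl : l ∉ I) : BoolFunDependsOn (restrictSet f I ρ) ⟨l, hl⟩ := by
  obtain ⟨a, ha, hfa⟩ := h
  refine ⟨a ∘ Subtype.val, ?_⟩
  rw [← update_comp_eq_of_injective a Subtype.val_injective]
  change restrictSet f I ρ (flipAt a l ∘ Subtype.val) ≠ _
  rwa [restrictSet_comp_val_of_eqOn f (ha.flipAt (mod_cast hl)), restrictSet_comp_val_of_eqOn f ha]

theorem exists_nondegenerate_subfunction_general (n k : ℕ)
    (f : (Fin n → Bool) → Bool) (hf : ∀ i : Fin n, BoolFunDependsOn f i) :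
    ∃ (I : Finset (Fin n)) (ρ : Fin n → Bool), I.card = n - k ∧
      ∀ j : {j : Fin n // j ∉ I}, BoolFunDependsOn (restrictSet f I ρ) j := by
  obtain ⟨I, hcard, ρ, hdep⟩ :=
    exists_restriction_forall_restrictionDependsOn f hf (n - k) (by simp)
  exact ⟨I, ρ, hcard, fun ⟨l, hl⟩ ↦ (hdep l hl).boolFunDependsOn_restrictSet hl⟩

/-- If `f` depends on all `n` variables and `0 < k ≤ n`, then there is a restriction fixing
`n - k` variables whose subfunction depends on all `k` free variables. -/
theorem exists_nondegenerate_subfunction (n k : ℕ) (hk : 0 < k) (hkn : k ≤ n)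
    (f : (Fin n → Bool) → Bool) (hf : ∀ i : Fin n, BoolFunDependsOn f i) :
    ∃ (I : Finset (Fin n)) (ρ : Fin n → Bool), I.card = n - k ∧
      ∀ j : {j : Fin n // j ∉ I}, BoolFunDependsOn (restrictSet f I ρ) j :=
  exists_nondegenerate_subfunction_general n k f hf
end

section
/- Let m = Π_{i=1}^{r} p_i^{e_i} be a positive integer, where p_1, …, p_r are distinct primes and e_1, …, e_r are positive integers. For an integer k ≥ 1, let L_k = Π_{i=1}^{r} p_i^{e_i + ⌊log_{p_i} k⌋}. Then for all nonnegative integers s and j, the binomial coefficients satisfy C(s·L_k + j, k) ≡ C(j, k) (mod m). -/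
/-!
By Vandermonde, `C(n + j, k) = ∑_{a + b = k} C(n, a) C(j, b)`, so `C(n + j, k) ≡ C(j, k) (mod M)`
as soon as `M` divides `C(n, a)` for `0 < a ≤ k`; iterating gives periodicity with period `n`.
For `n = p ^ (e + ⌊log_p k⌋)` Kummer's theorem gives `v_p C(n, a) = e + ⌊log_p k⌋ - v_p(a) ≥ e`,
and the same periodicity (with `j = 0`) passes this divisibility from `n` to its multiple `L`.
The prime powers `p_i ^ e_i` are pairwise coprime, so `m` itself divides `C(L, a)` for `0 < a ≤ k`.
-/

namespace Nat

theorem choose_add_modEq_of_dvd_choose {M n k : ℕ} (hn : ∀ a, 0 < a → a ≤ k → M ∣ n.choose a)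
    (j : ℕ) : (n + j).choose k ≡ j.choose k [MOD M] := by
  rw [add_choose_eq]
  refine (sum_modEq_single (a := (0, k)) (by simp) ?_).trans (by simp [ModEq])
  rintro ⟨a, b⟩ hab hne
  rw [Finset.HasAntidiagonal.mem_antidiagonal] at hab
  have ha : 0 < a := Nat.pos_of_ne_zero fun ha => hne (by simp [ha, ← hab])
  exact (modEq_zero_iff_dvd).2 ((hn a ha (by omega)).mul_right _)

theorem choose_mul_add_modEq_of_dvd_choose {M n k : ℕ}
    (hn : ∀ a, 0 < a → a ≤ k → M ∣ n.choose a) (s j : ℕ) :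
    (s * n + j).choose k ≡ j.choose k [MOD M] := by
  induction s generalizing j with
  | zero => simp [ModEq]
  | succ s ih =>
    rw [succ_mul, add_assoc]
    exact (ih (n + j)).trans (choose_add_modEq_of_dvd_choose hn j)

theorem dvd_choose_of_dvd_of_dvd_choose {M n k L : ℕ}
    (hn : ∀ a, 0 < a → a ≤ k → M ∣ n.choose a) (hnL : n ∣ L) :
    ∀ a, 0 < a → a ≤ k → M ∣ L.choose a := by
  intro a ha hak
  obtain ⟨c, rfl⟩ := hnL
  have := choose_mul_add_modEq_of_dvd_choose (fun b hb hba => hn b hb (hba.trans hak)) c 0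
  rwa [mul_comm, add_zero, choose_eq_zero_of_lt ha, modEq_zero_iff_dvd] at this

theorem Prime.pow_sub_factorization_dvd_choose_pow {p : ℕ} (hp : p.Prime) (n : ℕ) {a : ℕ}
    (ha : a ≠ 0) : p ^ (n - a.factorization p) ∣ (p ^ n).choose a := by
  rcases le_or_gt a (p ^ n) with han | han
  · rw [← factorization_choose_prime_pow hp han ha]
    exact ordProj_dvd _ p
  · rw [choose_eq_zero_of_lt han]
    exact dvd_zero _

theorem Prime.pow_dvd_choose_pow_add_log {p : ℕ} (hp : p.Prime) (e k : ℕ) :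
    ∀ a, 0 < a → a ≤ k → p ^ e ∣ (p ^ (e + log p k)).choose a := by
  intro a ha hak
  have hva : a.factorization p ≤ log p k :=
    le_log_of_pow_le hp.one_lt ((ordProj_le p ha.ne').trans hak)
  exact (pow_dvd_pow p (by omega)).trans (hp.pow_sub_factorization_dvd_choose_pow _ ha.ne')

end Nat

theorem choose_periodic_mod_general (r : ℕ) (p e : Fin r → ℕ)
    (hp : ∀ i, (p i).Prime) (hpd : Function.Injective p)
    (m : ℕ) (hm : m = ∏ i, p i ^ e i)
    (k : ℕ)
    (L : ℕ) (hL : L = ∏ i, p i ^ (e i + Nat.log (p i) k)) :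
    ∀ s j : ℕ, (s * L + j).choose k ≡ j.choose k [MOD m] := by
  have hprime_pow : ∀ i, ∀ a, 0 < a → a ≤ k → p i ^ e i ∣ L.choose a := fun i =>
    Nat.dvd_choose_of_dvd_of_dvd_choose ((hp i).pow_dvd_choose_pow_add_log (e i) k)
      (hL ▸ Finset.dvd_prod_of_mem _ (Finset.mem_univ i))
  have hcoprime : Pairwise (Function.onFun IsCoprime fun i => (p i : ℤ) ^ e i) := fun i i' hii' => by
    simpa using Nat.isCoprime_iff_coprime.2
      (Nat.coprime_pow_primes (e i) (e i') (hp i) (hp i') (hpd.ne hii'))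
  have hm_dvd : ∀ a, 0 < a → a ≤ k → m ∣ L.choose a := fun a ha hak => by
    rw [hm, ← Int.natCast_dvd_natCast]
    push_cast
    exact Fintype.prod_dvd_of_coprime hcoprime fun i => by exact_mod_cast hprime_pow i a ha hak
  exact Nat.choose_mul_add_modEq_of_dvd_choose hm_dvd

/-- Let `m = Π_{i} p_i^{e_i}` with `p_i` distinct primes and `e_i ≥ 1`, and for `k ≥ 1` let
`L_k = Π_i p_i^{e_i + ⌊log_{p_i} k⌋}`. Then `C(s·L_k + j, k) ≡ C(j, k) (mod m)` for all
nonnegative integers `s, j`. -/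
theorem choose_periodic_mod (r : ℕ) (p e : Fin r → ℕ)
    (hp : ∀ i, (p i).Prime) (hpd : Function.Injective p) (he : ∀ i, 0 < e i)
    (m : ℕ) (hm : m = ∏ i, p i ^ e i)
    (k : ℕ) (hk : 1 ≤ k)
    (L : ℕ) (hL : L = ∏ i, p i ^ (e i + Nat.log (p i) k)) :
    ∀ s j : ℕ, (s * L + j).choose k ≡ j.choose k [MOD m] :=
  choose_periodic_mod_general r p e hp hpd m hm k L hL
end

section
/- Let p_1, …, p_r be distinct primes, e_1, …, e_r positive integers, and m = Π_{i=1}^{r} p_i^{e_i} with m > 2, all fixed. For a Boolean function f : {0,1}^n → {0,1}, let d_{p_i^{e_i}}(f) denote its exact representing degree over ℤ_{p_i^{e_i}}. Then the fraction of functions f : {0,1}^n → {0,1} (out of all 2^{2^n} such functions) satisfying m · d_{p_1^{e_1}}(f) ⋯ d_{p_r^{e_r}}(f) > log₂ n − 1 tends to 1 as n → ∞. -/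
/-- `P` is multilinear: every variable has individual degree at most 1 in every monomial. -/
def Multilinear {n q : ℕ} (P : MvPolynomial (Fin n) (ZMod q)) : Prop :=
  ∀ d ∈ P.support, ∀ i, d i ≤ 1

/-- `P` represents `f` over `ℤ_q`: they agree on all 0/1 inputs. -/
def Represents {n q : ℕ} (P : MvPolynomial (Fin n) (ZMod q))
    (f : (Fin n → Bool) → Bool) : Prop :=
  ∀ x : Fin n → Bool,
    MvPolynomial.eval (fun i => if x i then (1 : ZMod q) else 0) P = if f x then 1 else 0

/-- `d` is the exact representing degree of `f` over `ℤ_q`: the (unique) multilinear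
polynomial representing `f` over `ℤ_q` has total degree `d`. -/
def RepDegree (q : ℕ) {n : ℕ} (f : (Fin n → Bool) → Bool) (d : ℕ) : Prop :=
  ∃ P : MvPolynomial (Fin n) (ZMod q), Multilinear P ∧ Represents P f ∧ P.totalDegree = d

/-!
If `m · ∏ dᵢ ≤ log₂ n - 1`, then either some `dᵢ = 0`, so that `f` is constant, or
`d₁ ≤ ∏ dᵢ ≤ log₂ n`. Either way `f` is represented over `ℤ_q`, `q = p₁ ^ e₁`, by a multilinear
polynomial of degree at most `log₂ n`. Such a polynomial is determined by its coefficients on the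
at most `(n + 1) ^ log₂ n` multilinear monomials of that degree, so there are at most
`q ^ (n + 1) ^ log₂ n = 2 ^ 2 ^ O(log² n)` such `f`: a vanishing fraction of all `2 ^ 2 ^ n`.
-/

open Filter Topology Finset MvPolynomial

def RepDegreeLE (q : ℕ) {n : ℕ} (f : (Fin n → Bool) → Bool) (D : ℕ) : Prop :=
  ∃ P : MvPolynomial (Fin n) (ZMod q), Multilinear P ∧ Represents P f ∧ P.totalDegree ≤ D

lemma Finsupp.card_support_le_sum {σ : Type*} (d : σ →₀ ℕ) : #d.support ≤ d.sum fun _ e => e :=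
  calc #d.support = ∑ _i ∈ d.support, 1 := card_eq_sum_ones _
    _ ≤ ∑ i ∈ d.support, d i :=
      Finset.sum_le_sum fun _ hi => Nat.one_le_iff_ne_zero.2 (Finsupp.mem_support_iff.1 hi)

lemma Finsupp.eq_of_support_eq_of_le_one {σ : Type*} {d d' : σ →₀ ℕ} (hd : ∀ i, d i ≤ 1)
    (hd' : ∀ i, d' i ≤ 1) (h : d.support = d'.support) : d = d' := by
  ext i
  have hi : d i ≠ 0 ↔ d' i ≠ 0 := by simp only [← Finsupp.mem_support_iff, h]
  have := hd i
  have := hd' i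
  omega

lemma card_finset_card_le_le_succ_pow (α : Type*) [Fintype α] (D : ℕ) :
    Nat.card {T : Finset α // #T ≤ D} ≤ (Fintype.card α + 1) ^ D := by
  classical
  rw [Nat.card_eq_fintype_card, Fintype.card_subtype, add_pow]
  calc #{T : Finset α | #T ≤ D}
      ≤ #((range (D + 1)).biUnion fun j => powersetCard j (univ : Finset α)) := by
        refine card_le_card fun T hT => ?_
        simp only [mem_filter, mem_univ, true_and] at hT
        simp only [mem_biUnion, mem_range, mem_powersetCard]
        exact ⟨#T, by omega, subset_univ T, rfl⟩
    _ ≤ ∑ j ∈ range (D + 1), #(powersetCard j (univ : Finset α)) := card_biUnion_le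
    _ ≤ ∑ j ∈ range (D + 1), Fintype.card α ^ j * 1 ^ (D - j) * D.choose j := by
        gcongr with j hj
        rw [card_powersetCard, card_univ, one_pow, mul_one]
        exact (Nat.choose_le_pow _ _).trans
          (Nat.le_mul_of_pos_right _ (Nat.choose_pos (Nat.lt_succ_iff.1 (mem_range.1 hj))))

section Representation

variable {n q : ℕ} {f : (Fin n → Bool) → Bool}

lemma Represents.apply_eq [Nontrivial (ZMod q)] {P Q : MvPolynomial (Fin n) (ZMod q)}
    {g : (Fin n → Bool) → Bool} (hf : Represents P f) (hg : Represents Q g) {x y : Fin n → Bool}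
    (h : eval (fun i => if x i then (1 : ZMod q) else 0) P =
      eval (fun i => if y i then (1 : ZMod q) else 0) Q) :
    f x = g y := by
  have := (hf x).symm.trans (h.trans (hg y))
  revert this
  cases f x <;> cases g y <;> simp

lemma RepDegreeLE.mono {D D' : ℕ} (hf : RepDegreeLE q f D) (h : D ≤ D') : RepDegreeLE q f D' :=
  let ⟨P, hPm, hPf, hPD⟩ := hf
  ⟨P, hPm, hPf, hPD.trans h⟩

lemma RepDegree.apply_eq_of_eq_zero [Nontrivial (ZMod q)] (hf : RepDegree q f 0)
    (x y : Fin n → Bool) : f x = f y := by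
  obtain ⟨P, -, hPf, hP⟩ := hf
  rw [totalDegree_eq_zero_iff_eq_C] at hP
  exact hPf.apply_eq hPf (by rw [hP, eval_C, eval_C])

lemma repDegreeLE_zero_of_apply_eq (hf : ∀ x y, f x = f y) : RepDegreeLE q f 0 := by
  refine ⟨C (if f fun _ => false then 1 else 0), fun d hd i => ?_, fun x => ?_,
    (totalDegree_C _).le⟩
  · rw [mem_support_iff, coeff_C] at hd
    obtain rfl : 0 = d := of_not_not fun h => hd (if_neg h)
    exact zero_le_one
  · rw [eval_C, hf x]

lemma Multilinear.le_one_and_card_support_le {P : MvPolynomial (Fin n) (ZMod q)} {D : ℕ}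
    (hP : Multilinear P) (hD : P.totalDegree ≤ D) {d : Fin n →₀ ℕ} (hd : d ∈ P.support) :
    (∀ i, d i ≤ 1) ∧ #d.support ≤ D :=
  ⟨hP d hd, d.card_support_le_sum.trans ((le_totalDegree hd).trans hD)⟩

lemma card_repDegreeLE_le (hq : 1 < q) (n D : ℕ) :
    Nat.card {f : (Fin n → Bool) → Bool // RepDegreeLE q f D} ≤ q ^ (n + 1) ^ D := by
  have := Fact.mk hq
  let M := {d : Fin n →₀ ℕ // (∀ i, d i ≤ 1) ∧ #d.support ≤ D}
  let toSupport : M → {T : Finset (Fin n) // #T ≤ D} := fun d => ⟨d.1.support, d.2.2⟩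
  have hsupport : Function.Injective toSupport := fun d d' h =>
    Subtype.ext (Finsupp.eq_of_support_eq_of_le_one d.2.1 d'.2.1 (congrArg Subtype.val h))
  have := Finite.of_injective _ hsupport
  choose P hPm hPf hPD using fun f : {f : (Fin n → Bool) → Bool // RepDegreeLE q f D} => f.2
  have hcoeff : Function.Injective fun f (d : M) => coeff d.1 (P f) := by
    intro f g h
    have hPg : P f = P g := by
      ext d
      by_cases hd : (∀ i, d i ≤ 1) ∧ #d.support ≤ D
      · exact congrFun h ⟨d, hd⟩
      · rw [notMem_support_iff.1 (mt ((hPm f).le_one_and_card_support_le (hPD f)) hd),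
          notMem_support_iff.1 (mt ((hPm g).le_one_and_card_support_le (hPD g)) hd)]
    exact Subtype.ext (funext fun x => (hPf f).apply_eq (hPf g) (by rw [hPg]))
  calc Nat.card {f : (Fin n → Bool) → Bool // RepDegreeLE q f D}
      ≤ Nat.card (M → ZMod q) := Nat.card_le_card_of_injective _ hcoeff
    _ = q ^ Nat.card M := by rw [Nat.card_fun, Nat.card_zmod]
    _ ≤ q ^ (n + 1) ^ D := by
      gcongr
      · omega
      · simpa using (Nat.card_le_card_of_injective _ hsupport).trans
          (card_finset_card_le_le_succ_pow (Fin n) D)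

end Representation

lemma RepDegree.repDegreeLE_prod {r : ℕ} {q : Fin r → ℕ} (hq : ∀ i, 1 < q i) {n : ℕ}
    {f : (Fin n → Bool) → Bool} {d : Fin r → ℕ} (hd : ∀ i, RepDegree (q i) f (d i)) (i₀ : Fin r) :
    RepDegreeLE (q i₀) f (∏ i, d i) := by
  by_cases hzero : ∃ j, d j = 0
  · obtain ⟨j, hj⟩ := hzero
    have := Fact.mk (hq j)
    exact (repDegreeLE_zero_of_apply_eq ((hj ▸ hd j).apply_eq_of_eq_zero)).mono (Nat.zero_le _)
  · push Not at hzero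
    obtain ⟨P, hPm, hPf, hPd⟩ := hd i₀
    exact ⟨P, hPm, hPf, hPd ▸ single_le_prod' (fun i _ => Nat.one_le_iff_ne_zero.2 (hzero i))
      (mem_univ i₀)⟩

lemma le_natLog_two_of_cast_le_logb {k n : ℕ} (h : (k : ℝ) ≤ Real.logb 2 n) : k ≤ Nat.log 2 n := by
  rw [← Real.natFloor_logb_natCast, Nat.cast_ofNat]
  exact Nat.le_floor h

lemma eventually_add_mul_succ_lt_two_pow (C : ℕ) :
    ∀ᶠ L : ℕ in atTop, C + L * (L + 1) < 2 ^ L := by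
  have hlim := (tendsto_pow_const_div_const_pow_of_one_lt 2 one_lt_two).eventually
    (gt_mem_nhds (by positivity : (0 : ℝ) < 1 / (C + 2)))
  filter_upwards [hlim, eventually_ge_atTop 1] with L hL hL1
  have hL1' : (1 : ℝ) ≤ L := by exact_mod_cast hL1
  rw [div_lt_div_iff₀ (by positivity) (by positivity), one_mul] at hL
  have : (C : ℝ) + L * (L + 1) ≤ L ^ 2 * (C + 2) := by
    nlinarith [mul_nonneg (Nat.cast_nonneg C) (by nlinarith : (0 : ℝ) ≤ L ^ 2 - 1)]
  exact_mod_cast this.trans_lt hL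

lemma eventually_add_log_mul_succ_lt (C : ℕ) :
    ∀ᶠ n : ℕ in atTop, C + Nat.log 2 n * (Nat.log 2 n + 1) < n := by
  have hlog : Tendsto (Nat.log 2) atTop atTop :=
    tendsto_atTop_atTop.2 fun L => ⟨2 ^ L, fun n hn => Nat.le_log_of_pow_le one_lt_two hn⟩
  filter_upwards [hlog.eventually (eventually_add_mul_succ_lt_two_pow C), eventually_ne_atTop 0]
    with n h hn
  exact h.trans_le (Nat.pow_log_le_self 2 hn)

lemma pow_pow_mul_two_pow_le {q n L : ℕ} (hn : n < 2 ^ (L + 1)) (h : q + L * (L + 1) < n) :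
    q ^ (n + 1) ^ L * 2 ^ n ≤ 2 ^ 2 ^ n := by
  obtain ⟨k, rfl⟩ : ∃ k, n = k + 1 := ⟨n - 1, by omega⟩
  have hK : 2 ^ (q + L * (L + 1)) + (k + 1) ≤ 2 ^ (k + 1) := by
    have h1 : 2 ^ (q + L * (L + 1)) ≤ 2 ^ k := Nat.pow_le_pow_right two_pos (by omega)
    have h2 : k < 2 ^ k := Nat.lt_two_pow_self
    have h3 : 2 ^ (k + 1) = 2 ^ k * 2 := pow_succ 2 k
    omega
  calc q ^ (k + 1 + 1) ^ L * 2 ^ (k + 1)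
      ≤ (2 ^ q) ^ (2 ^ (L + 1)) ^ L * 2 ^ (k + 1) := by
        gcongr
        · exact Nat.one_le_two_pow
        · exact Nat.lt_two_pow_self.le
        · exact hn
    _ = 2 ^ (q * 2 ^ (L * (L + 1)) + (k + 1)) := by
        rw [← pow_mul, ← pow_mul, ← pow_add, mul_comm L]
    _ ≤ 2 ^ (2 ^ (q + L * (L + 1)) + (k + 1)) := by
        rw [pow_add 2 q]
        gcongr
        exacts [one_le_two, Nat.lt_two_pow_self.le]
    _ ≤ 2 ^ 2 ^ (k + 1) := Nat.pow_le_pow_right two_pos hK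

lemma tendsto_card_repDegreeLE_log_div {q : ℕ} (hq : 1 < q) :
    Tendsto (fun n : ℕ =>
      (Nat.card {f : (Fin n → Bool) → Bool // RepDegreeLE q f (Nat.log 2 n)} : ℝ) / 2 ^ 2 ^ n)
      atTop (𝓝 0) := by
  refine squeeze_zero' (Eventually.of_forall fun n => by positivity) ?_
    (tendsto_pow_atTop_nhds_zero_of_lt_one (by norm_num : (0 : ℝ) ≤ 1 / 2) (by norm_num))
  filter_upwards [eventually_add_log_mul_succ_lt q] with n hn
  have hcard := (Nat.mul_le_mul_right (2 ^ n) (card_repDegreeLE_le hq n (Nat.log 2 n))).trans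
    (pow_pow_mul_two_pow_le (Nat.lt_pow_succ_log_self one_lt_two n) hn)
  rw [one_div_pow, div_le_div_iff₀ (by positivity) (by positivity), one_mul]
  exact_mod_cast hcard

lemma tendsto_card_div_one_of_not_imp {P Q : ∀ n : ℕ, ((Fin n → Bool) → Bool) → Prop}
    (hPQ : ∀ n f, ¬ P n f → Q n f)
    (hQ : Tendsto (fun n : ℕ => (Nat.card {f // Q n f} : ℝ) / 2 ^ 2 ^ n) atTop (𝓝 0)) :
    Tendsto (fun n : ℕ => (Nat.card {f // P n f} : ℝ) / 2 ^ 2 ^ n) atTop (𝓝 1) := by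
  classical
  have hsplit : ∀ n, (Nat.card {f // P n f} : ℝ) / 2 ^ 2 ^ n
      = 1 - (Nat.card {f // ¬ P n f} : ℝ) / 2 ^ 2 ^ n := by
    intro n
    have hcard : Nat.card {f // P n f} + Nat.card {f // ¬ P n f} = 2 ^ 2 ^ n := by
      simp only [Nat.card_eq_fintype_card]
      rw [Fintype.card_subtype_compl, Nat.add_sub_cancel' (Fintype.card_subtype_le _)]
      simp
    rw [eq_sub_iff_add_eq, ← add_div, ← Nat.cast_add, hcard]
    push_cast
    exact div_self (by positivity)
  have hnotP : Tendsto (fun n : ℕ => (Nat.card {f // ¬ P n f} : ℝ) / 2 ^ 2 ^ n) atTop (𝓝 0) :=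
    squeeze_zero (fun n => by positivity) (fun n => by
      gcongr
      exact Nat.card_le_card_of_injective _ (Subtype.impEmbedding _ _ (hPQ n)).injective) hQ
  simpa only [hsplit, sub_zero] using tendsto_const_nhds.sub hnotP

theorem almost_all_degree_product_lower_bound_general (r : ℕ) (p e : Fin r → ℕ)
    (hp : ∀ i, (p i).Prime) (he : ∀ i, 0 < e i)
    (m : ℕ) (hm : m = ∏ i, p i ^ e i) (hm2 : 2 < m) :
    Filter.Tendsto (fun n : ℕ =>
      (Nat.card {f : (Fin n → Bool) → Bool //
          ∀ d : Fin r → ℕ, (∀ i, RepDegree (p i ^ e i) f (d i)) →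
            Real.logb 2 n - 1 < (m : ℝ) * ∏ i, (d i : ℝ)} : ℝ) / 2 ^ (2 ^ n))
      Filter.atTop (nhds 1) := by
  have hr : r ≠ 0 := by
    rintro rfl
    simp [hm] at hm2
  let i₀ : Fin r := ⟨0, Nat.pos_of_ne_zero hr⟩
  have hq : ∀ i, 1 < p i ^ e i := fun i => Nat.one_lt_pow (he i).ne' (hp i).one_lt
  have hm1 : (1 : ℝ) ≤ m := by exact_mod_cast hm2.le.trans' one_le_two
  refine tendsto_card_div_one_of_not_imp (fun n f hf => ?_)
    (tendsto_card_repDegreeLE_log_div (hq i₀))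
  push Not at hf
  obtain ⟨d, hd, hfd⟩ := hf
  refine (RepDegree.repDegreeLE_prod hq hd i₀).mono (le_natLog_two_of_cast_le_logb ?_)
  push_cast
  nlinarith [(Finset.prod_nonneg fun i _ => Nat.cast_nonneg (d i) : (0 : ℝ) ≤ ∏ i, (d i : ℝ))]

/-- For fixed `m = Π p_i^{e_i} > 2` with the `p_i` distinct primes, the fraction of Boolean
functions `f : {0,1}^n → {0,1}` satisfying
`m · d_{p_1^{e_1}}(f) ⋯ d_{p_r^{e_r}}(f) > log₂ n - 1` tends to `1` as `n → ∞`. -/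
theorem almost_all_degree_product_lower_bound (r : ℕ) (p e : Fin r → ℕ)
    (hp : ∀ i, (p i).Prime) (hpd : Function.Injective p) (he : ∀ i, 0 < e i)
    (m : ℕ) (hm : m = ∏ i, p i ^ e i) (hm2 : 2 < m) :
    Filter.Tendsto (fun n : ℕ =>
      (Nat.card {f : (Fin n → Bool) → Bool //
          ∀ d : Fin r → ℕ, (∀ i, RepDegree (p i ^ e i) f (d i)) →
            Real.logb 2 n - 1 < (m : ℝ) * ∏ i, (d i : ℝ)} : ℝ) / 2 ^ (2 ^ n))
      Filter.atTop (nhds 1) :=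
  almost_all_degree_product_lower_bound_general r p e hp he m hm hm2
end

section
/- Let p_1, …, p_r be distinct primes, e_1, …, e_r positive integers, and m = Π_{i=1}^{r} p_i^{e_i} with m > 2, all fixed; let M = max_{i∈[r]} p_i^{e_i}. For a Boolean function f : {0,1}^n → {0,1}, let d_max(f) = max_{i∈[r]} d_{p_i^{e_i}}(f), where d_{p_i^{e_i}}(f) is the exact representing degree of f over ℤ_{p_i^{e_i}}. Then the fraction of functions f : {0,1}^n → {0,1} (out of all 2^{2^n} such functions) satisfying d_max(f) > (log₂ n − 1)^{1/r} / M tends to 1 as n → ∞. -/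
open Filter Topology MvPolynomial

/-! Fix one prime power `q = p_i ^ e_i`. The threshold is below `log₂ n`, so every function
failing the bound has a representing polynomial over `ℤ_q` of total degree at most `log₂ n`.
Such a polynomial is determined by its coefficients on the at most `(n + 1) ^ log₂ n` monomials
of degree `≤ log₂ n`, so there are at most `q ^ (n + 1) ^ log₂ n = 2 ^ 2 ^ O(log² n)` such
functions: a vanishing fraction of all `2 ^ 2 ^ n`. -/

theorem List.eq_of_getElem?_eq_of_length_le {α : Type*} {ℓ : ℕ} {l l' : List α}
    (hl : l.length ≤ ℓ) (hl' : l'.length ≤ ℓ)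
    (h : ∀ j : Fin ℓ, l[(j : ℕ)]? = l'[(j : ℕ)]?) : l = l' := by
  refine List.ext_getElem? fun i => ?_
  by_cases hi : i < ℓ
  · exact h ⟨i, hi⟩
  · rw [List.getElem?_eq_none (by omega), List.getElem?_eq_none (by omega)]

theorem Multiset.length_out {α : Type*} (s : Multiset α) : s.out.length = Multiset.card s := by
  conv_rhs => rw [← Quot.out_eq s]
  rfl

theorem Multiset.injective_getElem?_out (α : Type*) (ℓ : ℕ) :
    Function.Injective fun (s : {s : Multiset α // Multiset.card s ≤ ℓ}) (j : Fin ℓ) =>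
      s.1.out[(j : ℕ)]? := by
  rintro ⟨s, hs⟩ ⟨t, ht⟩ hst
  exact Subtype.ext <| Quotient.out_injective <|
    List.eq_of_getElem?_eq_of_length_le (s.length_out.trans_le hs) (t.length_out.trans_le ht)
      (congrFun hst)

instance Multiset.finite_card_le (α : Type*) [Finite α] (ℓ : ℕ) :
    Finite {s : Multiset α // Multiset.card s ≤ ℓ} :=
  Finite.of_injective _ (Multiset.injective_getElem?_out α ℓ)

theorem Multiset.natCard_card_le_le (α : Type*) [Finite α] (ℓ : ℕ) :
    Nat.card {s : Multiset α // Multiset.card s ≤ ℓ} ≤ (Nat.card α + 1) ^ ℓ := by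
  calc Nat.card {s : Multiset α // Multiset.card s ≤ ℓ}
      ≤ Nat.card (Fin ℓ → Option α) :=
        Nat.card_le_card_of_injective _ (Multiset.injective_getElem?_out α ℓ)
    _ = (Nat.card α + 1) ^ ℓ := by simp [Nat.card_fun]

theorem Represents.unique {n q : ℕ} [Nontrivial (ZMod q)]
    {P : MvPolynomial (Fin n) (ZMod q)} {f g : (Fin n → Bool) → Bool} (hf : Represents P f)
    (hg : Represents P g) : f = g := by
  funext x
  have := (hf x).symm.trans (hg x)
  revert this
  cases f x <;> cases g x <;> simp

theorem MvPolynomial.eq_of_coeff_eq_of_totalDegree_le {σ R : Type*} [CommSemiring R]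
    [DecidableEq σ] {ℓ : ℕ} {P Q : MvPolynomial σ R}
    (hP : P.totalDegree ≤ ℓ) (hQ : Q.totalDegree ≤ ℓ)
    (h : ∀ s : Multiset σ, Multiset.card s ≤ ℓ →
      P.coeff s.toFinsupp = Q.coeff s.toFinsupp) : P = Q := by
  ext d
  by_cases hd : Multiset.card (Finsupp.toMultiset d) ≤ ℓ
  · simpa [Finsupp.toMultiset_toFinsupp] using h _ hd
  · have hlt : ℓ < ∑ i ∈ d.support, d i := by
      rw [not_le, Finsupp.card_toMultiset] at hd
      exact hd
    rw [coeff_eq_zero_of_totalDegree_lt (hP.trans_lt hlt),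
      coeff_eq_zero_of_totalDegree_lt (hQ.trans_lt hlt)]

theorem natCard_represents_totalDegree_le (n q ℓ : ℕ) [NeZero q] [Nontrivial (ZMod q)] :
    Nat.card {f : (Fin n → Bool) → Bool //
        ∃ P : MvPolynomial (Fin n) (ZMod q), Represents P f ∧ P.totalDegree ≤ ℓ}
      ≤ q ^ (n + 1) ^ ℓ := by
  classical
  set S := {s : Multiset (Fin n) // Multiset.card s ≤ ℓ}
  calc _ ≤ Nat.card (S → ZMod q) := by
        refine Nat.card_le_card_of_injective
          (fun f s => f.2.choose.coeff (Multiset.toFinsupp s.1)) fun f g hfg => ?_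
        obtain ⟨hfP, hfdeg⟩ := f.2.choose_spec
        obtain ⟨hgP, hgdeg⟩ := g.2.choose_spec
        have hPQ := eq_of_coeff_eq_of_totalDegree_le hfdeg hgdeg fun s hs =>
          congrFun hfg ⟨s, hs⟩
        exact Subtype.ext (hfP.unique (hPQ ▸ hgP))
    _ = q ^ Nat.card S := by rw [Nat.card_fun, Nat.card_zmod]
    _ ≤ q ^ (n + 1) ^ ℓ := by
        gcongr
        · exact NeZero.one_le
        · simpa using Multiset.natCard_card_le_le (Fin n) ℓ

theorem Nat.succ_sq_le_two_pow {ℓ : ℕ} (hℓ : 6 ≤ ℓ) : (ℓ + 1) ^ 2 ≤ 2 ^ ℓ := by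
  induction ℓ, hℓ using Nat.le_induction with
  | base => norm_num
  | succ ℓ hℓ ih => rw [pow_succ 2]; nlinarith

theorem pow_pow_mul_two_pow_le_two_pow_two_pow {q n ℓ : ℕ} (hℓ : 6 ≤ ℓ)
    (hq : q ≤ 2 ^ (ℓ + 1)) (hℓn : 2 ^ ℓ ≤ n) (hnℓ : n < 2 ^ (ℓ + 1)) :
    q ^ (n + 1) ^ ℓ * 2 ^ n ≤ 2 ^ 2 ^ n := by
  have hexp : (ℓ + 1) * 2 ^ ((ℓ + 1) * ℓ) + 2 ^ (ℓ + 1) ≤ 2 ^ n := by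
    have hsq := Nat.succ_sq_le_two_pow hℓ
    calc (ℓ + 1) * 2 ^ ((ℓ + 1) * ℓ) + 2 ^ (ℓ + 1)
        ≤ 2 ^ ℓ * 2 ^ ((ℓ + 1) * ℓ) + 2 ^ ℓ * 2 ^ ((ℓ + 1) * ℓ) := by
          gcongr
          · exact hsq.trans' (Nat.le_self_pow two_ne_zero _)
          · rw [← pow_add]
            exact Nat.pow_le_pow_right two_pos (by nlinarith)
      _ = 2 ^ ((ℓ + 1) ^ 2) := by ring
      _ ≤ 2 ^ n := Nat.pow_le_pow_right two_pos (hsq.trans hℓn)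
  calc q ^ (n + 1) ^ ℓ * 2 ^ n
      ≤ (2 ^ (ℓ + 1)) ^ (2 ^ (ℓ + 1)) ^ ℓ * (2 : ℕ) ^ 2 ^ (ℓ + 1) := by
        have hbase : q ^ (n + 1) ^ ℓ ≤ (2 ^ (ℓ + 1)) ^ (2 ^ (ℓ + 1)) ^ ℓ :=
          (Nat.pow_le_pow_left hq _).trans (Nat.pow_le_pow_right (by positivity)
            (Nat.pow_le_pow_left hnℓ _))
        exact Nat.mul_le_mul hbase (Nat.pow_le_pow_right two_pos hnℓ.le)
    _ = 2 ^ ((ℓ + 1) * 2 ^ ((ℓ + 1) * ℓ) + 2 ^ (ℓ + 1)) := by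
        rw [← pow_mul, ← pow_mul, ← pow_add]
    _ ≤ 2 ^ 2 ^ n := Nat.pow_le_pow_right two_pos hexp

theorem tendsto_pow_pow_log_div_two_pow_two_pow (q : ℕ) :
    Tendsto (fun n : ℕ => ((q ^ (n + 1) ^ Nat.log 2 n : ℕ) : ℝ) / 2 ^ 2 ^ n)
      atTop (𝓝 0) := by
  refine squeeze_zero' (.of_forall fun n => by positivity) ?_
    (tendsto_pow_atTop_nhds_zero_of_lt_one (by norm_num : (0 : ℝ) ≤ 1 / 2) (by norm_num))
  filter_upwards [eventually_ge_atTop (2 ^ max 6 q)] with n hn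
  have hℓ : max 6 q ≤ Nat.log 2 n := Nat.le_log_of_pow_le one_lt_two hn
  have hq : q ≤ 2 ^ (Nat.log 2 n + 1) := (le_of_max_le_right hℓ).trans
    (Nat.lt_two_pow_self.le.trans (Nat.pow_le_pow_right two_pos (Nat.le_succ _)))
  have key := pow_pow_mul_two_pow_le_two_pow_two_pow (le_of_max_le_left hℓ) hq
    (Nat.pow_log_le_self 2 ((Nat.two_pow_pos _).trans_le hn).ne')
    (Nat.lt_pow_succ_log_self one_lt_two n)
  rw [div_le_iff₀ (by positivity), one_div_pow, one_div_mul_eq_div, le_div_iff₀ (by positivity)]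
  exact_mod_cast key

theorem Nat.le_log_of_cast_le_logb {b d n : ℕ} (h : (d : ℝ) ≤ Real.logb b n) :
    d ≤ Nat.log b n := by
  rw [← Real.natFloor_logb_natCast]
  exact Nat.le_floor h

theorem Real.rpow_one_div_div_le_self {x M : ℝ} {r : ℕ} (hx : 1 ≤ x) (hr : 0 < r)
    (hM : 1 ≤ M) : x ^ (1 / r : ℝ) / M ≤ x :=
  (div_le_self (by positivity) hM).trans <| Real.rpow_le_self_of_one_le hx <|
    (div_le_one (by positivity)).2 (by exact_mod_cast hr)

theorem Real.logb_sub_one_rpow_div_le_logb {n r : ℕ} {M : ℝ} (hn : 4 ≤ n) (hr : 0 < r)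
    (hM : 1 ≤ M) : (logb 2 n - 1) ^ ((1 : ℝ) / r) / M ≤ logb 2 n := by
  have hlog : 2 ≤ logb 2 n := by
    rw [le_logb_iff_rpow_le one_lt_two (by positivity)]
    norm_num
    exact_mod_cast hn
  calc _ ≤ logb 2 n - 1 := rpow_one_div_div_le_self (by linarith) hr hM
    _ ≤ logb 2 n := by linarith

theorem Nat.card_subtype_add_card_subtype_not {α : Type*} [Finite α] (P : α → Prop) :
    Nat.card {x // P x} + Nat.card {x // ¬P x} = Nat.card α := by
  classical
  rw [← Nat.card_sum, Nat.card_congr (Equiv.sumCompl P)]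

theorem tendsto_natCard_subtype_div_of_not_le {α : ℕ → Type*} [∀ n, Finite (α n)]
    [∀ n, Nonempty (α n)] {P : ∀ n, α n → Prop} {b : ℕ → ℝ}
    (hP : ∀ᶠ n in atTop, (Nat.card {x // ¬P n x} : ℝ) ≤ b n)
    (hb : Tendsto (fun n => b n / Nat.card (α n)) atTop (𝓝 0)) :
    Tendsto (fun n => (Nat.card {x // P n x} : ℝ) / Nat.card (α n)) atTop (𝓝 1) := by
  have hnot : Tendsto (fun n => (Nat.card {x // ¬P n x} : ℝ) / Nat.card (α n)) atTop (𝓝 0) :=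
    squeeze_zero' (.of_forall fun n => by positivity)
      (hP.mono fun n hn => by gcongr) hb
  have hcompl : ∀ n, (Nat.card {x // P n x} : ℝ) / Nat.card (α n)
      = 1 - (Nat.card {x // ¬P n x} : ℝ) / Nat.card (α n) := fun n => by
    rw [eq_sub_iff_add_eq, ← add_div, ← Nat.cast_add,
      Nat.card_subtype_add_card_subtype_not, div_self (Nat.cast_ne_zero.2 Nat.card_pos.ne')]
  simpa [hcompl] using (tendsto_const_nhds (x := (1 : ℝ))).sub hnot

theorem almost_all_max_degree_lower_bound_general (r : ℕ) (p e : Fin r → ℕ)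
    (hp : ∀ i, (p i).Prime) (he : ∀ i, 0 < e i)
    (m : ℕ) (hm : m = ∏ i, p i ^ e i) (hm2 : 2 < m)
    (M : ℕ) (hM : M = Finset.univ.sup (fun i : Fin r => p i ^ e i)) :
    Filter.Tendsto (fun n : ℕ =>
      (Nat.card {f : (Fin n → Bool) → Bool //
          ∀ d : Fin r → ℕ, (∀ i, RepDegree (p i ^ e i) f (d i)) →
            (Real.logb 2 n - 1) ^ ((1 : ℝ) / r) / (M : ℝ)
              < ((Finset.univ.sup d : ℕ) : ℝ)} : ℝ) / 2 ^ (2 ^ n))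
      Filter.atTop (nhds 1) := by
  have hr : 0 < r := Nat.pos_of_ne_zero fun h => by subst h; simp at hm; omega
  set i₀ : Fin r := ⟨0, hr⟩
  set q := p i₀ ^ e i₀
  have hq : 2 ≤ q := (hp i₀).two_le.trans (Nat.le_self_pow (he i₀).ne' _)
  have hqM : q ≤ M := hM ▸ Finset.le_sup (f := fun i => p i ^ e i) (Finset.mem_univ i₀)
  have : NeZero q := ⟨by omega⟩
  have : Fact (1 < q) := ⟨hq⟩
  have hcard : ∀ n, (2 : ℝ) ^ 2 ^ n = Nat.card ((Fin n → Bool) → Bool) := by simp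
  simp only [hcard]
  refine tendsto_natCard_subtype_div_of_not_le ?_
    (by simpa only [← hcard] using tendsto_pow_pow_log_div_two_pow_two_pow q)
  filter_upwards [eventually_ge_atTop 4] with n hn
  refine Nat.cast_le.2 ((Nat.card_le_card_of_injective _
    (Subtype.impEmbedding _ _ fun f hf => ?_).injective).trans
    (natCard_represents_totalDegree_le n q _))
  push Not at hf
  obtain ⟨d, hd, hdle⟩ := hf
  obtain ⟨P, -, hPf, hPdeg⟩ := hd i₀
  refine ⟨P, hPf, Nat.le_log_of_cast_le_logb ?_⟩
  calc (P.totalDegree : ℝ) ≤ (Finset.univ.sup d : ℕ) := by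
        exact_mod_cast hPdeg ▸ Finset.le_sup (f := d) (Finset.mem_univ i₀)
    _ ≤ (Real.logb 2 n - 1) ^ ((1 : ℝ) / r) / (M : ℝ) := hdle
    _ ≤ Real.logb 2 n := Real.logb_sub_one_rpow_div_le_logb hn hr
          (by exact_mod_cast (by omega : 1 ≤ M))

/-- For fixed `m = Π p_i^{e_i} > 2` with the `p_i` distinct primes and
`M = max_i p_i^{e_i}`, the fraction of Boolean functions `f : {0,1}^n → {0,1}` satisfying
`max_i d_{p_i^{e_i}}(f) > (log₂ n - 1)^{1/r} / M` tends to `1` as `n → ∞`. -/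
theorem almost_all_max_degree_lower_bound (r : ℕ) (p e : Fin r → ℕ)
    (hp : ∀ i, (p i).Prime) (hpd : Function.Injective p) (he : ∀ i, 0 < e i)
    (m : ℕ) (hm : m = ∏ i, p i ^ e i) (hm2 : 2 < m)
    (M : ℕ) (hM : M = Finset.univ.sup (fun i : Fin r => p i ^ e i)) :
    Filter.Tendsto (fun n : ℕ =>
      (Nat.card {f : (Fin n → Bool) → Bool //
          ∀ d : Fin r → ℕ, (∀ i, RepDegree (p i ^ e i) f (d i)) →
            (Real.logb 2 n - 1) ^ ((1 : ℝ) / r) / (M : ℝ)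
              < ((Finset.univ.sup d : ℕ) : ℝ)} : ℝ) / 2 ^ (2 ^ n))
      Filter.atTop (nhds 1) :=
  almost_all_max_degree_lower_bound_general r p e hp he m hm hm2 M hM
end
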